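/- arXiv:quant-ph/0703026 — 2 statements merged into one kernel-verified Lean document; each statement's English description precedes it below -/
import Mathlib

section
/- Let ρ be a density matrix on ℂ^{N_A} ⊗ ℂ^{N_B} with spectral decomposition ρ = Σ_i λ_i |φ_i⟩⟨φ_i| (λ_i > 0 distinct-labelled eigenvectors), and let ρ' = (u ⊗ w) ρ (u ⊗ w)ᴴ for unitaries u, w. Then the reduced matrices ρ'_i = Tr_B|φ'_i⟩⟨φ'_i| of the eigenvectors |φ'_i⟩ = (u⊗w)|φ_i⟩ satisfy ρ'_i = u ρ_i uᴴ, and consequently Ω(ρ') = Ω(ρ) and X(ρ') = X(ρ). -/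
/-! The eigenvector `(u ⊗ w) φ` of `ρ'` has coefficient matrix `u A wᵀ`, and since `wᵀ` is again
unitary its reduced matrix is `u (A Aᴴ) uᴴ`. Conjugation by `u` is multiplicative and preserves
traces, so the invariants `Ω` and `X` are unchanged. -/

open Matrix Kronecker

namespace Matrix

variable {m m' n n' R : Type*}

/-- `vec Aᵀ` is the vector with coefficients `(k, l) ↦ A k l`. -/
theorem kronecker_mulVec_vec_transpose [Fintype m] [Fintype n] [CommSemiring R]
    (u : Matrix m' m R) (w : Matrix n' n R) (A : Matrix m n R) :
    (u ⊗ₖ w) *ᵥ vec Aᵀ = vec (u * A * wᵀ)ᵀ := by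
  rw [kronecker_mulVec_vec, transpose_mul, transpose_mul, transpose_transpose, Matrix.mul_assoc]

variable [Fintype n] [DecidableEq n] [CommRing R] [StarRing R]

theorem mul_transpose_mul_conjTranspose_of_isometry [Fintype n'] {w : Matrix n' n R}
    (hw : wᴴ * w = 1) (B : Matrix m n R) :
    B * wᵀ * (B * wᵀ)ᴴ = B * Bᴴ := by
  have hwt : wᵀ * (wᵀ)ᴴ = 1 := by
    rw [conjTranspose_transpose_eq_transpose_conjTranspose, ← transpose_mul, hw, transpose_one]
  rw [conjTranspose_mul, Matrix.mul_assoc, ← Matrix.mul_assoc wᵀ, hwt, Matrix.one_mul]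

theorem isometry_conj_mul_conj [Fintype m] {u : Matrix m n R} (hu : uᴴ * u = 1)
    (X Y : Matrix n n R) :
    u * X * uᴴ * (u * Y * uᴴ) = u * (X * Y) * uᴴ := by
  simp only [Matrix.mul_assoc]
  rw [← Matrix.mul_assoc uᴴ, hu, Matrix.one_mul]

theorem trace_isometry_conj [Fintype m] {u : Matrix m n R} (hu : uᴴ * u = 1)
    (X : Matrix n n R) : trace (u * X * uᴴ) = trace X := by
  rw [trace_mul_cycle, hu, Matrix.one_mul]

end Matrix

theorem stmt14_general (NA NB n : ℕ)
    (A A' : Fin n → Matrix (Fin NA) (Fin NB) ℂ)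
    (φ φ' : Fin n → (Fin NA × Fin NB) → ℂ)
    (hφ : ∀ i k l, φ i (k, l) = A i k l)
    (hφA' : ∀ i k l, φ' i (k, l) = A' i k l)
    (u : Matrix (Fin NA) (Fin NA) ℂ) (w : Matrix (Fin NB) (Fin NB) ℂ)
    (hu : u ∈ Matrix.unitaryGroup (Fin NA) ℂ)
    (hw : w ∈ Matrix.unitaryGroup (Fin NB) ℂ)
    (hφ' : ∀ i, φ' i = (u ⊗ₖ w).mulVec (φ i)) :
    (∀ i, A' i * (A' i)ᴴ = u * (A i * (A i)ᴴ) * uᴴ) ∧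
    (∀ i j, (A' i * (A' i)ᴴ * (A' j * (A' j)ᴴ)).trace
        = (A i * (A i)ᴴ * (A j * (A j)ᴴ)).trace) ∧
    (∀ i j k, (A' i * (A' i)ᴴ * (A' j * (A' j)ᴴ) * (A' k * (A' k)ᴴ)).trace
        = (A i * (A i)ᴴ * (A j * (A j)ᴴ) * (A k * (A k)ᴴ)).trace) := by
  have hA' (i : Fin n) : A' i = u * A i * wᵀ := by
    have hvec : φ i = vec (A i)ᵀ := funext fun ⟨k, l⟩ => hφ i k l
    have hvec' : φ' i = vec (A' i)ᵀ := funext fun ⟨k, l⟩ => hφA' i k l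
    rw [hφ', hvec, kronecker_mulVec_vec_transpose, vec_inj, transpose_inj] at hvec'
    exact hvec'.symm
  have reduced (i : Fin n) : A' i * (A' i)ᴴ = u * (A i * (A i)ᴴ) * uᴴ := by
    rw [hA', mul_transpose_mul_conjTranspose_of_isometry hw.1, conjTranspose_mul]
    simp only [Matrix.mul_assoc]
  refine ⟨reduced, fun i j => ?_, fun i j k => ?_⟩
  · rw [reduced, reduced, isometry_conj_mul_conj hu.1, trace_isometry_conj hu.1]
  · rw [reduced, reduced, reduced, isometry_conj_mul_conj hu.1, isometry_conj_mul_conj hu.1,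
      trace_isometry_conj hu.1]

theorem stmt14 (NA NB n : ℕ) (lam : Fin n → ℝ) (hlam : ∀ i, 0 < lam i)
    (A A' : Fin n → Matrix (Fin NA) (Fin NB) ℂ)
    (φ φ' : Fin n → (Fin NA × Fin NB) → ℂ)
    (hφ : ∀ i k l, φ i (k, l) = A i k l)
    (hφA' : ∀ i k l, φ' i (k, l) = A' i k l)
    (u : Matrix (Fin NA) (Fin NA) ℂ) (w : Matrix (Fin NB) (Fin NB) ℂ)
    (hu : u ∈ Matrix.unitaryGroup (Fin NA) ℂ)
    (hw : w ∈ Matrix.unitaryGroup (Fin NB) ℂ)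
    (hφ' : ∀ i, φ' i = (u ⊗ₖ w).mulVec (φ i))
    (ρ ρ' : Matrix (Fin NA × Fin NB) (Fin NA × Fin NB) ℂ)
    (hρ : ρ = ∑ i, (lam i : ℂ) • Matrix.vecMulVec (φ i) (star (φ i)))
    (hρ' : ρ' = (u ⊗ₖ w) * ρ * (u ⊗ₖ w)ᴴ) :
    (∀ i, A' i * (A' i)ᴴ = u * (A i * (A i)ᴴ) * uᴴ) ∧
    (∀ i j, (A' i * (A' i)ᴴ * (A' j * (A' j)ᴴ)).trace
        = (A i * (A i)ᴴ * (A j * (A j)ᴴ)).trace) ∧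
    (∀ i j k, (A' i * (A' i)ᴴ * (A' j * (A' j)ᴴ) * (A' k * (A' k)ᴴ)).trace
        = (A i * (A i)ᴴ * (A j * (A j)ᴴ) * (A k * (A k)ᴴ)).trace) :=
  stmt14_general NA NB n A A' φ φ' hφ hφA' u w hu hw hφ'
end

section
/- Let A and A' be complex n × n matrices such that A Aᴴ = A' A'ᴴ, Aᴴ A = A'ᴴ A', both products A Aᴴ and Aᴴ A commute with each other for A (condition [A Aᴴ, Aᴴ A] = 0) and A Aᴴ is invertible. Then there exist unitary matrices u, w with A' = u A w. -/
open Matrix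

theorem Matrix.mul_inv_mem_unitaryGroup_of_conjTranspose_mul_self_eq {n α : Type*} [Fintype n]
    [DecidableEq n] [CommRing α] [StarRing α] {A B : Matrix n n α} (hA : IsUnit A)
    (h : Bᴴ * B = Aᴴ * A) : B * A⁻¹ ∈ unitaryGroup n α := by
  have hA : IsUnit A.det := (isUnit_iff_isUnit_det A).mp hA
  rw [mem_unitaryGroup_iff', star_eq_conjTranspose, conjTranspose_mul]
  calc (A⁻¹)ᴴ * Bᴴ * (B * A⁻¹) = (A⁻¹)ᴴ * (Bᴴ * B) * A⁻¹ := by simp only [Matrix.mul_assoc]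
    _ = (A * A⁻¹)ᴴ * (A * A⁻¹) := by rw [h, conjTranspose_mul]; simp only [Matrix.mul_assoc]
    _ = 1 := by rw [mul_nonsing_inv A hA, conjTranspose_one, Matrix.one_mul]

theorem stmt15_general (n : ℕ) (A A' : Matrix (Fin n) (Fin n) ℂ)
    (h2 : Aᴴ * A = A'ᴴ * A')
    (hinv : IsUnit (A * Aᴴ)) :
    ∃ u w : Matrix (Fin n) (Fin n) ℂ,
      u ∈ Matrix.unitaryGroup (Fin n) ℂ ∧ w ∈ Matrix.unitaryGroup (Fin n) ℂ ∧
      A' = u * A * w := by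
  have hA : IsUnit A := isUnit_of_mul_isUnit_left hinv
  refine ⟨A' * A⁻¹, 1, mul_inv_mem_unitaryGroup_of_conjTranspose_mul_self_eq hA h2.symm,
    one_mem _, ?_⟩
  rw [Matrix.mul_one, nonsing_inv_mul_cancel_right _ _ ((isUnit_iff_isUnit_det A).mp hA)]

theorem stmt15 (n : ℕ) (A A' : Matrix (Fin n) (Fin n) ℂ)
    (h1 : A * Aᴴ = A' * A'ᴴ) (h2 : Aᴴ * A = A'ᴴ * A')
    (hcomm : (A * Aᴴ) * (Aᴴ * A) = (Aᴴ * A) * (A * Aᴴ))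
    (hinv : IsUnit (A * Aᴴ)) :
    ∃ u w : Matrix (Fin n) (Fin n) ℂ,
      u ∈ Matrix.unitaryGroup (Fin n) ℂ ∧ w ∈ Matrix.unitaryGroup (Fin n) ℂ ∧
      A' = u * A * w :=
  stmt15_general n A A' h2 hinv
end
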